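/- Let s, t ∈ (0, √2) be such that f^(k)(s) ≠ 0 and f^(k)(t) ≠ 0 for all k ≥ 0, and suppose that for every k ≥ 0 the points f^(k)(s) and f^(k)(t) belong to the same interval I_i (i.e., the unique index i ∈ ℤ with f^(k)(s) ∈ I_i equals the unique index with f^(k)(t) ∈ I_i). Then s = t; in other words, the itinerary determines the point uniquely. -/

import Mathlib

noncomputable section

/-- `β = √2 - 1`. -/
def β : ℝ := Real.sqrt 2 - 1

/-- `ω = √2 + 1`. -/
def ω : ℝ := Real.sqrt 2 + 1

/-- The break points `Δ_i`. -/
def Δ (i : ℤ) : ℝ :=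
  if i < 0 then β ^ i.natAbs
  else if i = 0 then β
  else Real.sqrt 2 - β ^ i.natAbs

/-- The intervals `I_i`. -/
def Iint (i : ℤ) : Set ℝ :=
  if i < 0 then Set.Ioc (Δ (i - 1)) (Δ i)
  else if i = 0 then Set.Ioo β 1
  else Set.Ico (Δ i) (Δ (i + 1))

/-- The defining formula of `f` on the interval `I_i`. -/
def fval (i : ℤ) (s : ℝ) : ℝ :=
  if i < 0 then ω ^ (i.natAbs + 1) * (Δ i - s)
  else if i = 0 then ω * (s - β)
  else ω ^ (i.natAbs + 1) * (s - Δ i)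

/-- `f` is the renormalization map: `f 0 = f √2 = 0` and on each interval `I_i`
    it is given by the corresponding affine formula. These conditions determine
    `f` uniquely on `[0, √2]`. -/
def IsLuroth (f : ℝ → ℝ) : Prop :=
  f 0 = 0 ∧ f (Real.sqrt 2) = 0 ∧ ∀ i : ℤ, ∀ s ∈ Iint i, f s = fval i s

/-- `ℚ(√2)` as a subset of `ℝ`. -/
def QSqrt2 : Set ℝ := {x | ∃ a b : ℚ, x = (a : ℝ) + (b : ℝ) * Real.sqrt 2}

/-- `ℤ[√2]` as a subset of `ℝ`. -/
def ZSqrt2 : Set ℝ := {x | ∃ m n : ℤ, x = (m : ℝ) + (n : ℝ) * Real.sqrt 2}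

/-- `M_d = {s ∈ [0,√2] : d·s ∈ ℤ[√2]}`. -/
def Mset (d : ℤ) : Set ℝ :=
  {s | s ∈ Set.Icc 0 (Real.sqrt 2) ∧ (d : ℝ) * s ∈ ZSqrt2}


/-!
On each interval `I_i` the map `f` is affine with slope `±ω^(|i|+1)`, of absolute value at least
`ω > 2`, and it sends `I_i` into `[0, √2)`. An orbit that never hits `0` therefore stays in
`(0, √2)`, and two orbits with the same itinerary are always in the same interval, so their
distance at least doubles at each step while staying below `√2`. This forces the distance to be `0`.
-/

open Set

theorem eq_of_forall_mul_dist_le_dist_succ {X : Type*} [MetricSpace X] {u v : ℕ → X} {c C : ℝ}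
    (hc : 1 < c) (hexp : ∀ k, c * dist (u k) (v k) ≤ dist (u (k + 1)) (v (k + 1)))
    (hbdd : ∀ k, dist (u k) (v k) ≤ C) : u 0 = v 0 := by
  have hgrowth : ∀ k, c ^ k * dist (u 0) (v 0) ≤ dist (u k) (v k) := by
    intro k
    induction k with
    | zero => simp
    | succ k ih =>
      calc c ^ (k + 1) * dist (u 0) (v 0) = c * (c ^ k * dist (u 0) (v 0)) := by ring
        _ ≤ c * dist (u k) (v k) := by gcongr
        _ ≤ _ := hexp k
  by_contra hne
  have hd : 0 < dist (u 0) (v 0) := dist_pos.2 hne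
  obtain ⟨k, hk⟩ := pow_unbounded_of_one_lt (C / dist (u 0) (v 0)) hc
  rw [div_lt_iff₀ hd] at hk
  linarith [hgrowth k, hbdd k]

lemma β_pos : 0 < β := by unfold β; linarith [Real.one_lt_sqrt_two]

lemma β_lt_one : β < 1 := by unfold β; linarith [Real.sqrt_two_lt_three_halves]

lemma two_le_ω : 2 ≤ ω := by unfold ω; linarith [Real.one_lt_sqrt_two]

lemma β_mul_ω : β * ω = 1 := by
  unfold β ω; nlinarith [Real.sq_sqrt (zero_le_two : (0 : ℝ) ≤ 2)]

lemma two_le_ω_pow_succ (n : ℕ) : 2 ≤ ω ^ (n + 1) :=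
  two_le_ω.trans (le_self_pow₀ (by linarith [two_le_ω]) n.succ_ne_zero)

lemma ω_pow_succ_mul_sub (n : ℕ) : ω ^ (n + 1) * (β ^ n - β ^ (n + 1)) = Real.sqrt 2 := by
  have : ω ^ (n + 1) * (β ^ n - β ^ (n + 1)) = (β * ω) ^ n * (ω - β * ω) := by ring
  rw [this, β_mul_ω, one_pow, one_mul]
  unfold ω; ring

lemma ω_pow_succ_mul_mem_Ico {n : ℕ} {y : ℝ} (hy : y ∈ Ico 0 (β ^ n - β ^ (n + 1))) :
    ω ^ (n + 1) * y ∈ Ico 0 (Real.sqrt 2) := by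
  have hω : 0 < ω ^ (n + 1) := by linarith [two_le_ω_pow_succ n]
  refine ⟨mul_nonneg hω.le hy.1, ?_⟩
  rw [← ω_pow_succ_mul_sub n]
  exact mul_lt_mul_of_pos_left hy.2 hω

section Intervals

variable {n : ℕ}

lemma Δ_neg_natCast (hn : n ≠ 0) : Δ (-n) = β ^ n := by
  simp [Δ, Nat.pos_of_ne_zero hn]

lemma Δ_natCast (hn : n ≠ 0) : Δ n = Real.sqrt 2 - β ^ n := by
  simp [Δ, hn]

lemma Iint_neg_natCast (hn : n ≠ 0) : Iint (-n) = Ioc (β ^ (n + 1)) (β ^ n) := by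
  have : -(n : ℤ) - 1 = -((n + 1 : ℕ) : ℤ) := by push_cast; ring
  rw [Iint, if_pos (by omega), this, Δ_neg_natCast hn, Δ_neg_natCast n.succ_ne_zero]

lemma Iint_zero : Iint 0 = Ioo β 1 := by simp [Iint]

lemma Iint_natCast (hn : n ≠ 0) :
    Iint n = Ico (Real.sqrt 2 - β ^ n) (Real.sqrt 2 - β ^ (n + 1)) := by
  have : (n : ℤ) + 1 = ((n + 1 : ℕ) : ℤ) := by push_cast; ring
  rw [Iint, if_neg (by omega), if_neg (by omega), this, Δ_natCast hn, Δ_natCast n.succ_ne_zero]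

lemma fval_neg_natCast (hn : n ≠ 0) (x : ℝ) : fval (-n) x = ω ^ (n + 1) * (β ^ n - x) := by
  simp [fval, Nat.pos_of_ne_zero hn, Δ_neg_natCast hn]

lemma fval_zero (x : ℝ) : fval 0 x = ω * (x - β) := by simp [fval]

lemma fval_natCast (hn : n ≠ 0) (x : ℝ) :
    fval n x = ω ^ (n + 1) * (x - (Real.sqrt 2 - β ^ n)) := by
  simp [fval, hn, Δ_natCast hn]

end Intervals

lemma dist_fval (i : ℤ) (x y : ℝ) : dist (fval i x) (fval i y) = ω ^ (i.natAbs + 1) * dist x y := by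
  have hω : 0 ≤ ω := by linarith [two_le_ω]
  unfold fval
  split_ifs with hneg hzero
  · rw [Real.dist_eq, Real.dist_eq, ← mul_sub, abs_mul, abs_of_nonneg (by positivity), abs_sub_comm]
    ring_nf
  · simp [hzero, Real.dist_eq, ← mul_sub, abs_mul, abs_of_nonneg hω]
  · rw [Real.dist_eq, Real.dist_eq, ← mul_sub, abs_mul, abs_of_nonneg (by positivity)]
    ring_nf

lemma fval_mem_Ico {i : ℤ} {x : ℝ} (hx : x ∈ Iint i) : fval i x ∈ Ico 0 (Real.sqrt 2) := by
  obtain ⟨n, rfl | rfl⟩ := i.eq_nat_or_neg <;> rcases eq_or_ne n 0 with rfl | hn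
  any_goals
    simp only [Nat.cast_zero, neg_zero, Iint_zero] at hx ⊢
    rw [fval_zero, ← pow_one ω]
    exact ω_pow_succ_mul_mem_Ico (n := 0) ⟨by linarith [hx.1], by rw [pow_zero, pow_one]; linarith [hx.2]⟩
  · rw [Iint_natCast hn] at hx
    rw [fval_natCast hn]
    exact ω_pow_succ_mul_mem_Ico ⟨by linarith [hx.1], by linarith [hx.2]⟩
  · rw [Iint_neg_natCast hn] at hx
    rw [fval_neg_natCast hn]
    exact ω_pow_succ_mul_mem_Ico ⟨by linarith [hx.2], by linarith [hx.1]⟩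

lemma exists_β_pow_succ_lt_le_β_pow {x : ℝ} (hx₀ : 0 < x) (hxβ : x ≤ β) :
    ∃ n ≠ 0, β ^ (n + 1) < x ∧ x ≤ β ^ n := by
  obtain ⟨n, hlt, hle⟩ :=
    exists_nat_pow_near_of_lt_one hx₀ (hxβ.trans β_lt_one.le) β_pos β_lt_one
  refine ⟨n, ?_, hlt, hle⟩
  rintro rfl
  rw [zero_add, pow_one] at hlt
  linarith

lemma exists_mem_Iint {x : ℝ} (hx : x ∈ Ioo 0 (Real.sqrt 2)) : ∃ i, x ∈ Iint i := by
  rcases le_or_gt x β with hxβ | hβx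
  · obtain ⟨n, hn, hlt, hle⟩ := exists_β_pow_succ_lt_le_β_pow hx.1 hxβ
    exact ⟨-n, by rw [Iint_neg_natCast hn]; exact ⟨hlt, hle⟩⟩
  rcases lt_or_ge x 1 with hx1 | h1x
  · exact ⟨0, by rw [Iint_zero]; exact ⟨hβx, hx1⟩⟩
  · obtain ⟨n, hn, hlt, hle⟩ :=
      exists_β_pow_succ_lt_le_β_pow (x := Real.sqrt 2 - x) (by linarith [hx.2]) (by unfold β; linarith)
    exact ⟨n, by rw [Iint_natCast hn]; exact ⟨by linarith, by linarith⟩⟩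

namespace IsLuroth

variable {f : ℝ → ℝ}

lemma two_mul_dist_le (hf : IsLuroth f) {i : ℤ} {x y : ℝ} (hx : x ∈ Iint i) (hy : y ∈ Iint i) :
    2 * dist x y ≤ dist (f x) (f y) := by
  rw [hf.2.2 i x hx, hf.2.2 i y hy, dist_fval]
  gcongr
  exact two_le_ω_pow_succ _

lemma apply_mem_Ico (hf : IsLuroth f) {x : ℝ} (hx : x ∈ Ioo 0 (Real.sqrt 2)) :
    f x ∈ Ico 0 (Real.sqrt 2) := by
  obtain ⟨i, hi⟩ := exists_mem_Iint hx
  rw [hf.2.2 i x hi]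
  exact fval_mem_Ico hi

lemma iterate_mem_Ioo (hf : IsLuroth f) {s : ℝ} (hs : s ∈ Ioo 0 (Real.sqrt 2))
    (hs₀ : ∀ k : ℕ, f^[k] s ≠ 0) (k : ℕ) : f^[k] s ∈ Ioo 0 (Real.sqrt 2) := by
  induction k with
  | zero => exact hs
  | succ k ih =>
    have hmem := hf.apply_mem_Ico ih
    rw [← Function.iterate_succ_apply' f k s] at hmem
    exact ⟨hmem.1.lt_of_ne' (hs₀ (k + 1)), hmem.2⟩

end IsLuroth

/-- the itinerary determines the point: if `s, t ∈ (0,√2)` have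
never-vanishing orbits and, for every `k`, the iterates `f^[k] s` and
`f^[k] t` belong to the same interval `I_i`, then `s = t`. -/
theorem luroth_itinerary_determines_point (f : ℝ → ℝ) (hf : IsLuroth f) :
    ∀ s ∈ Set.Ioo (0 : ℝ) (Real.sqrt 2), ∀ t ∈ Set.Ioo (0 : ℝ) (Real.sqrt 2),
      (∀ k : ℕ, f^[k] s ≠ 0) → (∀ k : ℕ, f^[k] t ≠ 0) →
      (∀ k : ℕ, ∀ i : ℤ, f^[k] s ∈ Iint i ↔ f^[k] t ∈ Iint i) →
      s = t := by
  intro s hs t ht hs₀ ht₀ hitin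
  have hs_orbit := hf.iterate_mem_Ioo hs hs₀
  have ht_orbit := hf.iterate_mem_Ioo ht ht₀
  refine eq_of_forall_mul_dist_le_dist_succ (u := fun k ↦ f^[k] s) (v := fun k ↦ f^[k] t)
    (C := Real.sqrt 2) one_lt_two (fun k ↦ ?_) (fun k ↦ ?_)
  · obtain ⟨i, hi⟩ := exists_mem_Iint (hs_orbit k)
    simp only [Function.iterate_succ_apply']
    exact hf.two_mul_dist_le hi ((hitin k i).1 hi)
  · simpa using Real.dist_le_of_mem_Icc (Ioo_subset_Icc_self (hs_orbit k))
      (Ioo_subset_Icc_self (ht_orbit k))
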